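/- Let G be a context-free grammar over a partially ordered terminal alphabet Σ in which every nonterminal is bireachable, and suppose that L_A(G) is a chain and R_{A,w}(G) is a chain for every nonterminal A and every w ∈ Σ*. Then 𝓛(G) has polynomial antichain growth. -/

import Mathlib

open Filter
open scoped ENNReal

/-- The lexicographic partial order on words induced by a strict order `r` on letters:
`ε R w` for all `w`, and `(x :: w) R (y :: w')` iff `r x y`, or `x = y` and `w R w'`. -/
inductive LexR {α : Type*} (r : α → α → Prop) : List α → List α → Prop
  | nil (w : List α) : LexR r [] w
  | head {x y : α} (w w' : List α) (h : r x y) : LexR r (x :: w) (y :: w')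
  | cons (x : α) {w w' : List α} (h : LexR r w w') : LexR r (x :: w) (x :: w')

/-- Two words are comparable (`u ∼ v`) if `u R v` or `v R u`. -/
def LexComp {α : Type*} (r : α → α → Prop) (u v : List α) : Prop :=
  LexR r u v ∨ LexR r v u

/-- A language is an antichain if any two distinct words of it are incomparable. -/
def IsAntichainLang {α : Type*} (r : α → α → Prop) (L : Set (List α)) : Prop :=
  ∀ u ∈ L, ∀ v ∈ L, u ≠ v → ¬ LexComp r u v

/-- A language is a quasiantichain if any two words of it are incomparable or one is a
prefix of the other. -/
def IsQuasiantichainLang {α : Type*} (r : α → α → Prop) (L : Set (List α)) : Prop :=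
  ∀ u ∈ L, ∀ v ∈ L, u <+: v ∨ v <+: u ∨ ¬ LexComp r u v

/-- A language is a chain if any two words of it are comparable. -/
def IsChainLang {α : Type*} (r : α → α → Prop) (L : Set (List α)) : Prop :=
  ∀ u ∈ L, ∀ v ∈ L, LexComp r u v

/-- `|L|_{=n}`: the number of words of length `n` in `L`. -/
noncomputable def countLen {α : Type*} (L : Set (List α)) (n : ℕ) : ℕ :=
  {w ∈ L | w.length = n}.ncard

/-- `L` has exponential growth of order `ε` if `limsup |L|_{=n} / 2^(εn) > 0`. -/
def ExpGrowthOrder {α : Type*} (L : Set (List α)) (ε : ℝ) : Prop :=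
  0 < Filter.limsup (fun n : ℕ => (countLen L n : ℝ≥0∞) / (2 : ℝ≥0∞) ^ (ε * n)) Filter.atTop

/-- `L` has exponential growth if it has exponential growth of some order `ε > 0`. -/
def ExpGrowth {α : Type*} (L : Set (List α)) : Prop :=
  ∃ ε : ℝ, 0 < ε ∧ ExpGrowthOrder L ε

/-- `L` has polynomial growth if `limsup |L|_{=n} / n^k < ∞` for some `k`. -/
def PolyGrowth {α : Type*} (L : Set (List α)) : Prop :=
  ∃ k : ℕ, Filter.limsup (fun n : ℕ => (countLen L n : ℝ≥0∞) / (n : ℝ≥0∞) ^ k) Filter.atTop < ⊤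

/-- `L` is an antichain family if the set of words of length `n` in `L` is an antichain
for every `n`. -/
def AntichainFamily {α : Type*} (r : α → α → Prop) (L : Set (List α)) : Prop :=
  ∀ n : ℕ, IsAntichainLang r {w ∈ L | w.length = n}

/-- `L` has exponential antichain growth if some subset of `L` is an antichain family
with exponential growth. -/
def ExpAntichainGrowth {α : Type*} (r : α → α → Prop) (L : Set (List α)) : Prop :=
  ∃ L' ⊆ L, AntichainFamily r L' ∧ ExpGrowth L'

/-- `L` has polynomial antichain growth if every antichain family contained in `L`
has polynomial growth. -/
def PolyAntichainGrowth {α : Type*} (r : α → α → Prop) (L : Set (List α)) : Prop :=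
  ∀ L' ⊆ L, AntichainFamily r L' → PolyGrowth L'

/-- The Kleene star of a language: all finite concatenations of words of `L`. -/
def KStarLang {α : Type*} (L : Set (List α)) : Set (List α) :=
  {w | ∃ S : List (List α), (∀ u ∈ S, u ∈ L) ∧ w = S.flatten}

/-- `L_A(G) = {w | A ⇒* wAu for some u}`. -/
def cfgL {T : Type} (G : ContextFreeGrammar T) (A : G.NT) : Set (List T) :=
  {w | ∃ u : List T, G.Derives [Symbol.nonterminal A]
    (w.map Symbol.terminal ++ [Symbol.nonterminal A] ++ u.map Symbol.terminal)}

/-- `R_{A,w}(G) = {u | A ⇒* wAu}`. -/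
def cfgR {T : Type} (G : ContextFreeGrammar T) (A : G.NT) (w : List T) : Set (List T) :=
  {u | G.Derives [Symbol.nonterminal A]
    (w.map Symbol.terminal ++ [Symbol.nonterminal A] ++ u.map Symbol.terminal)}

/-- A nonterminal `A` is bireachable if `S ⇒* uAu'` for some terminal words `u, u'` and
`A ⇒* v` for some terminal word `v`. -/
def CfgBireachable {T : Type} (G : ContextFreeGrammar T) (A : G.NT) : Prop :=
  (∃ u u' : List T, G.Derives [Symbol.nonterminal G.initial]
    (u.map Symbol.terminal ++ [Symbol.nonterminal A] ++ u'.map Symbol.terminal)) ∧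
  (∃ v : List T, G.Derives [Symbol.nonterminal A] (v.map Symbol.terminal))

/-!
Comparable words of equal length differ first at a letter, so their comparison survives any
extension of both words. Parse a word of `𝓛(G)` and, whenever the label `A` of a subtree reappears
at a node below it, keep only the lower occurrence and absorb the rest into a left and right
context: `A ⇒* l A r` turns a pair `(U, V)` with `V ∈ R_{A,U}` into `(l ++ U, V ++ r)`. What
remains is a profile: a tree of depth at most the number of nonterminals and bounded width whose
nodes carry a label `A` and the lengths of words `U ∈ L_A(G)` and `V ∈ R_{A,U}(G)`. Because these
sets are chains, two words with the same profile are comparable or equal. So in an antichain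
family each word of length `n` is determined by its profile, and there are only polynomially many
profiles in `n`.
-/

theorem List.Forall₂.forall₂_of_same_left {α β γ : Type*} {R : α → β → Prop} {R' : α → γ → Prop}
    {S : β → γ → Prop} {as : List α} {bs : List β} {cs : List γ} (h : List.Forall₂ R as bs)
    (h' : List.Forall₂ R' as cs) (H : ∀ a ∈ as, ∀ b c, R a b → R' a c → S b c) :
    List.Forall₂ S bs cs := by
  induction h generalizing cs with
  | nil => cases h'; exact .nil
  | cons hab _ ih =>
    cases h' with
    | cons hac h' =>
      exact .cons (H _ (by simp) _ _ hab hac) (ih h' fun a ha => H a (by simp [ha]))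

theorem List.Forall₂.exists_of_mem_right {α β : Type*} {R : α → β → Prop} {as : List α}
    {bs : List β} (h : List.Forall₂ R as bs) {b : β} (hb : b ∈ bs) : ∃ a ∈ as, R a b := by
  induction h with
  | nil => simp at hb
  | @cons a b' _ _ hab _ ih =>
    rcases List.mem_cons.mp hb with rfl | hb
    exacts [⟨a, by simp, hab⟩, (ih hb).imp fun a h => ⟨by simp [h.1], h.2⟩]

theorem List.exists_forall₂_of_forall_exists {α β : Type*} {R : α → β → Prop} :
    ∀ {as : List α}, (∀ a ∈ as, ∃ b, R a b) → ∃ bs, List.Forall₂ R as bs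
  | [], _ => ⟨[], .nil⟩
  | a :: as, h =>
    let ⟨b, hb⟩ := h a (by simp)
    let ⟨bs, hbs⟩ := exists_forall₂_of_forall_exists fun a ha => h a (by simp [ha])
    ⟨b :: bs, .cons hb hbs⟩

theorem List.eq_of_forall_getElem?_map_eq {α β : Type*} {f : α → β} {s : Set α}
    (hf : Set.InjOn f s) {l l' : List α} (hs : ∀ a ∈ l, a ∈ s) (hs' : ∀ a ∈ l', a ∈ s) {b : ℕ}
    (hb : l.length ≤ b) (hb' : l'.length ≤ b) (h : ∀ i < b, l[i]?.map f = l'[i]?.map f) :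
    l = l' := by
  refine List.ext_getElem? fun i => ?_
  by_cases hi : i < b
  · have h := h i hi
    cases h₁ : l[i]? <;> cases h₂ : l'[i]? <;> simp only [h₁, h₂, Option.map_none,
      Option.map_some, reduceCtorEq, Option.some.injEq] at h ⊢
    exact hf (hs _ (List.mem_of_getElem? h₁)) (hs' _ (List.mem_of_getElem? h₂)) h
  · rw [List.getElem?_eq_none (by omega), List.getElem?_eq_none (by omega)]

theorem Set.ncard_le_card_of_exists_code {α C : Type*} [Finite C] {s : Set α}
    (R : α → C → Prop) (hex : ∀ a ∈ s, ∃ c, R a c)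
    (huniq : ∀ a ∈ s, ∀ a' ∈ s, ∀ c, R a c → R a' c → a = a') : s.ncard ≤ Nat.card C := by
  choose f hf using hex
  rw [← Nat.card_coe_set_eq]
  exact Nat.card_le_card_of_injective (fun a : s => f a a.2) fun a a' h =>
    Subtype.ext (huniq a a.2 a' a'.2 _ (hf a a.2) (by simpa only [h] using hf a' a'.2))

section Lex

variable {α : Type*} {r : α → α → Prop}

theorem LexR.refl : ∀ u : List α, LexR r u u
  | [] => .nil []
  | x :: u => .cons x (LexR.refl u)

theorem LexR.append_left {v w : List α} (h : LexR r v w) : ∀ u : List α, LexR r (u ++ v) (u ++ w)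
  | [] => h
  | x :: u => .cons x (h.append_left u)

def LexBelow (r : α → α → Prop) (u v : List α) : Prop :=
  ∀ a b : List α, LexR r (u ++ a) (v ++ b)

theorem LexR.eq_or_lexBelow {u v : List α} (h : LexR r u v) (hl : u.length = v.length) :
    u = v ∨ LexBelow r u v := by
  induction h with
  | nil w => exact .inl (List.length_eq_zero_iff.mp hl.symm).symm
  | head w w' h => exact .inr fun _ _ => .head _ _ h
  | cons x _ ih =>
    rcases ih (by simpa using hl) with rfl | hb
    · exact .inl rfl
    · exact .inr fun a b => .cons x (hb a b)

def StableLexComp (r : α → α → Prop) (u v : List α) : Prop :=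
  u = v ∨ LexBelow r u v ∨ LexBelow r v u

theorem StableLexComp.lexComp {u v : List α} (h : StableLexComp r u v) : LexComp r u v := by
  rcases h with rfl | h | h
  · exact .inl (LexR.refl u)
  · exact .inl (by simpa using h [] [])
  · exact .inr (by simpa using h [] [])

theorem LexComp.stableLexComp {u v : List α} (h : LexComp r u v) (hl : u.length = v.length) :
    StableLexComp r u v := by
  rcases h with h | h
  · rcases h.eq_or_lexBelow hl with rfl | h
    exacts [.inl rfl, .inr (.inl h)]
  · rcases h.eq_or_lexBelow hl.symm with rfl | h
    exacts [.inl rfl, .inr (.inr h)]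

theorem StableLexComp.append {u v x y : List α} (h : StableLexComp r u v)
    (h' : u = v → StableLexComp r x y) : StableLexComp r (u ++ x) (v ++ y) := by
  rcases h with rfl | h | h
  · rcases h' rfl with rfl | h' | h'
    · exact .inl rfl
    · exact .inr (.inl fun a b => by simpa using (h' a b).append_left u)
    · exact .inr (.inr fun a b => by simpa using (h' a b).append_left u)
  · exact .inr (.inl fun a b => by simpa using h (x ++ a) (y ++ b))
  · exact .inr (.inr fun a b => by simpa using h (y ++ a) (x ++ b))

theorem StableLexComp.flatten {xs ys : List (List α)} (h : List.Forall₂ (StableLexComp r) xs ys) :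
    StableLexComp r xs.flatten ys.flatten := by
  induction h with
  | nil => exact .inl rfl
  | cons hxy _ ih => exact hxy.append fun _ => ih

end Lex

namespace ContextFreeGrammar

variable {T : Type} {G : ContextFreeGrammar T}

theorem Derives.append {u u' v v' : List (Symbol T G.NT)} (hu : G.Derives u u')
    (hv : G.Derives v v') : G.Derives (u ++ v) (u' ++ v') :=
  (hu.append_right v).trans (hv.append_left u')

theorem Derives.substitute {a b : Symbol T G.NT} {X Y Z : List (Symbol T G.NT)}
    (h : G.Derives [a] (X ++ [b] ++ Y)) (hb : G.Derives [b] Z) : G.Derives [a] (X ++ Z ++ Y) :=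
  h.trans (((Derives.refl X).append hb).append (.refl Y))

end ContextFreeGrammar

theorem mem_cfgR_append {T : Type} {G : ContextFreeGrammar T} {A : G.NT} {l r U V : List T}
    (hA : G.Derives [.nonterminal A]
      (l.map .terminal ++ [.nonterminal A] ++ r.map .terminal))
    (hV : V ∈ cfgR G A U) : V ++ r ∈ cfgR G A (l ++ U) := by
  simpa [cfgR] using hA.substitute hV

theorem nil_mem_cfgR_nil {T : Type} (G : ContextFreeGrammar T) (A : G.NT) : [] ∈ cfgR G A [] := by
  simpa [cfgR] using ContextFreeGrammar.Derives.refl _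

inductive Profile (T N : Type*) where
  | leaf : T → Profile T N
  | node : N → ℕ → ℕ → List (Profile T N) → Profile T N

namespace Profile

universe u v

variable {T N L : Type*}

@[induction_eliminator]
theorem induction {motive : Profile T N → Prop} (leaf : ∀ t, motive (.leaf t))
    (node : ∀ B pl ql cs, (∀ c ∈ cs, motive c) → motive (.node B pl ql cs)) : ∀ p, motive p
  | .leaf t => leaf t
  | .node B pl ql cs => node B pl ql cs fun c _ => induction leaf node c

def symbol : Profile T N → Symbol T N
  | leaf t => .terminal t
  | node B _ _ _ => .nonterminal B

inductive IsBounded (b : ℕ) (F : Finset N) : ℕ → Profile T N → Prop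
  | leaf (t : T) (d : ℕ) : IsBounded b F (d + 1) (.leaf t)
  | node {B : N} {pl ql d : ℕ} {cs : List (Profile T N)} (hB : B ∈ F) (hlen : cs.length ≤ b)
      (hcs : ∀ c ∈ cs, IsBounded b F d c) : IsBounded b F (d + 1) (.node B pl ql cs)

theorem IsBounded.node_congr {b d : ℕ} {F : Finset N} {B : N} {pl ql pl' ql' : ℕ}
    {cs : List (Profile T N)} (h : IsBounded b F d (.node B pl ql cs)) :
    IsBounded b F d (.node B pl' ql' cs) := by
  cases h with | node hB hlen hcs => exact .node hB hlen hcs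

/-- For a grammar, `R B U` is `R_{B,U}(G)`. A node records only the lengths of the context words
`U` and `V` around its children. -/
inductive Fits (R : N → List T → Set (List T)) : Profile T N → List T → Prop where
  | leaf (t : T) : Fits R (.leaf t) [t]
  | node {B : N} {pl ql : ℕ} {cs : List (Profile T N)} {U V : List T} {ws : List (List T)}
      (hU : U.length = pl) (hV : V.length = ql) (h : V ∈ R B U)
      (hcs : List.Forall₂ (Fits R) cs ws) : Fits R (.node B pl ql cs) (U ++ ws.flatten ++ V)

variable {R : N → List T → Set (List T)}

theorem Fits.stableLexComp {r : T → T → Prop} (hU : ∀ B, IsChainLang r {U | (R B U).Nonempty})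
    (hV : ∀ B U, IsChainLang r (R B U)) :
    ∀ (p : Profile T N) {w w' : List T}, Fits R p w → Fits R p w' → StableLexComp r w w' := by
  intro p
  induction p with
  | leaf t => rintro _ _ ⟨⟩ ⟨⟩; exact .inl rfl
  | node B pl ql cs ih =>
    intro w w' hw hw'
    cases hw with | node hl hr hP hcs =>
    cases hw' with | node hl' hr' hP' hcs' =>
    simp only [List.append_assoc]
    refine (LexComp.stableLexComp (hU B _ ⟨_, hP⟩ _ ⟨_, hP'⟩) (hl.trans hl'.symm)).append ?_
    rintro rfl
    exact .append (.flatten (hcs.forall₂_of_same_left hcs' ih)) fun _ ↦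
      (hV B _ _ hP _ hP').stableLexComp (hr.trans hr'.symm)

theorem Fits.le_of_length_le {B : N} {pl ql n : ℕ} {cs : List (Profile T N)} {w : List T}
    (h : Fits R (.node B pl ql cs) w) (hn : w.length ≤ n) :
    pl ≤ n ∧ ql ≤ n ∧ ∀ c ∈ cs, ∃ z, Fits R c z ∧ z.length ≤ n := by
  cases h with | node hU hV _ hcs =>
  simp only [List.length_append, List.length_flatten] at hn
  refine ⟨by omega, by omega, fun c hc => ?_⟩
  obtain ⟨z, hz, hcz⟩ := hcs.flip.exists_of_mem_right hc
  have : z.length ≤ _ := List.le_sum_of_mem (List.mem_map_of_mem (f := List.length) hz)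
  exact ⟨z, hcz, by omega⟩

def Code (T : Type u) (L : Type v) (b n : ℕ) : ℕ → Type (max u v)
  | 0 => PUnit
  | d + 1 => T ⊕ L × Fin (n + 1) × Fin (n + 1) × (Fin b → Option (Code T L b n d))

instance Code.instFinite [Finite T] [Finite L] (b n : ℕ) : ∀ d, Finite (Code T L b n d)
  | 0 => inferInstanceAs (Finite PUnit)
  | d + 1 =>
    have := Code.instFinite b n d
    inferInstanceAs (Finite (T ⊕ L × Fin (n + 1) × Fin (n + 1) × (Fin b → Option _)))

theorem exists_card_code_le (T L : Type*) [Finite T] [Finite L] (b : ℕ) :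
    ∀ d, ∃ K E : ℕ, ∀ n, Nat.card (Code T L b n d) ≤ K * (n + 1) ^ E
  | 0 => ⟨1, 0, fun _ => by simp [Code]⟩
  | d + 1 => by
    obtain ⟨K, E, hKE⟩ := exists_card_code_le T L b d
    refine ⟨Nat.card T + Nat.card L * (K + 1) ^ b, 2 + b * E, fun n => ?_⟩
    have hcard : Nat.card (Code T L b n (d + 1)) = Nat.card T +
        Nat.card L * ((n + 1) * ((n + 1) * (Nat.card (Code T L b n d) + 1) ^ b)) := by
      simp [Code, Nat.card_sum, Nat.card_prod, Nat.card_fun]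
    have hcode : Nat.card (Code T L b n d) + 1 ≤ (K + 1) * (n + 1) ^ E := by
      nlinarith [hKE n, Nat.one_le_pow E (n + 1) n.succ_pos]
    calc Nat.card (Code T L b n (d + 1))
        ≤ Nat.card T * (n + 1) ^ (2 + b * E) +
          Nat.card L * ((n + 1) * ((n + 1) * ((K + 1) * (n + 1) ^ E) ^ b)) := by
          rw [hcard]
          gcongr
          exact Nat.le_mul_of_pos_right _ (Nat.one_le_pow _ _ n.succ_pos)
      _ = (Nat.card T + Nat.card L * (K + 1) ^ b) * (n + 1) ^ (2 + b * E) := by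
          rw [mul_pow, ← pow_mul]; ring

def encode (e : N → L) (b n : ℕ) : (d : ℕ) → Profile T N → Code T L b n d
  | 0, _ => PUnit.unit
  | _ + 1, leaf t => .inl t
  | d + 1, node B pl ql cs => .inr (e B, ⟨min pl n, by omega⟩, ⟨min ql n, by omega⟩,
      fun i => cs[i.1]?.map (encode e b n d))

theorem encode_injOn {e : N → L} {F : Finset N} (he : Set.InjOn e F) {b n : ℕ} :
    ∀ d, Set.InjOn (encode e b n d) {p | p.IsBounded b F d ∧ ∃ w, Fits R p w ∧ w.length ≤ n}
  | 0 => by rintro _ ⟨⟨⟩, -⟩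
  | d + 1 => by
    rintro (_ | ⟨B, pl, ql, cs⟩) ⟨hp, w, hw, hwn⟩ (_ | ⟨B', pl', ql', cs'⟩) ⟨hp', w', hw', hwn'⟩ heq
      <;> simp only [encode, reduceCtorEq] at heq
    · rw [Sum.inl.inj heq]
    have heq := Sum.inr.inj heq
    simp only [Prod.mk.injEq, Fin.mk.injEq] at heq
    obtain ⟨hB, hpl, hql, hcs⟩ := heq
    cases hp with | node hBF hlen hcsb =>
    cases hp' with | node hBF' hlen' hcsb' =>
    obtain ⟨hpln, hqln, hcn⟩ := hw.le_of_length_le hwn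
    obtain ⟨hpln', hqln', hcn'⟩ := hw'.le_of_length_le hwn'
    obtain rfl := he hBF hBF' hB
    obtain rfl : pl = pl' := by omega
    obtain rfl : ql = ql' := by omega
    congr 1
    exact List.eq_of_forall_getElem?_map_eq (encode_injOn he d)
      (fun c hc => ⟨hcsb c hc, hcn c hc⟩) (fun c hc => ⟨hcsb' c hc, hcn' c hc⟩) hlen hlen'
      fun i hi => congrFun hcs ⟨i, hi⟩

end Profile

theorem Profile.Fits.pad {T : Type} {G : ContextFreeGrammar T} {A : G.NT} {pl ql : ℕ}
    {cs : List (Profile T G.NT)} {w l r : List T} (h : Fits (cfgR G) (.node A pl ql cs) w)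
    (hA : G.Derives [.nonterminal A] (l.map .terminal ++ [.nonterminal A] ++ r.map .terminal)) :
    Fits (cfgR G) (.node A (l.length + pl) (ql + r.length) cs) (l ++ w ++ r) := by
  cases h with | node hU hV hP hcs =>
  simpa using Fits.node (U := l ++ _) (by simp [hU]) (by simp [hV]) (mem_cfgR_append hA hP) hcs

inductive ParseTree (T N : Type*) where
  | leaf : T → ParseTree T N
  | node : ContextFreeRule T N → List (ParseTree T N) → ParseTree T N

namespace ParseTree

variable {T N : Type*}

@[induction_eliminator]
theorem induction {motive : ParseTree T N → Prop} (leaf : ∀ t, motive (.leaf t))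
    (node : ∀ r cs, (∀ c ∈ cs, motive c) → motive (.node r cs)) : ∀ t, motive t
  | .leaf t => leaf t
  | .node r cs => node r cs fun c _ => induction leaf node c

def symbol : ParseTree T N → Symbol T N
  | leaf t => .terminal t
  | node r _ => .nonterminal r.input

@[simp] theorem symbol_leaf (t : T) : (leaf t : ParseTree T N).symbol = .terminal t := rfl

@[simp] theorem symbol_node (r : ContextFreeRule T N) (cs : List (ParseTree T N)) :
    (node r cs).symbol = .nonterminal r.input := rfl

@[simp]
def yield : ParseTree T N → List T
  | leaf t => [t]
  | node _ cs => cs.flatMap yield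

inductive IsChild : ParseTree T N → ParseTree T N → Prop
  | mk {c : ParseTree T N} {r : ContextFreeRule T N} {cs : List (ParseTree T N)} (h : c ∈ cs) :
      IsChild c (node r cs)

theorem wellFounded_isChild : WellFounded (@IsChild T N) :=
  Subrelation.wf (r := InvImage (· < ·) sizeOf)
    (by
      rintro _ _ ⟨h⟩
      have := List.sizeOf_lt_of_mem h
      simp only [InvImage, node.sizeOf_spec]
      omega)
    (InvImage.wf _ wellFounded_lt)

inductive IsValid (G : ContextFreeGrammar T) : ParseTree T G.NT → Prop
  | leaf (t : T) : IsValid G (leaf t)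
  | node {r : ContextFreeRule T G.NT} {cs : List (ParseTree T G.NT)} (hr : r ∈ G.rules)
      (hout : cs.map symbol = r.output) (hcs : ∀ c ∈ cs, IsValid G c) : IsValid G (node r cs)

section Grammar

open ContextFreeGrammar Relation

variable {T : Type} {G : ContextFreeGrammar T}

theorem derives_flatMap_yield {cs : List (ParseTree T G.NT)}
    (h : ∀ c ∈ cs, G.Derives [c.symbol] (c.yield.map .terminal)) :
    G.Derives (cs.map symbol) ((cs.flatMap yield).map .terminal) := by
  induction cs with
  | nil => exact .refl []
  | cons c cs ih => simpa using (h c (by simp)).append (ih fun c hc => h c (by simp [hc]))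

theorem IsValid.derives {t : ParseTree T G.NT} (ht : t.IsValid G) :
    G.Derives [t.symbol] (t.yield.map .terminal) := by
  induction t with
  | leaf a => simpa using Derives.refl _
  | node r cs ih =>
    cases ht with | node hr hout hcs =>
    have hstep : G.Derives [.nonterminal r.input] r.output :=
      Produces.single ⟨r, hr, .input_output⟩
    rw [← hout] at hstep
    simp only [symbol, yield]
    exact hstep.trans (derives_flatMap_yield fun c hc => ih c hc (hcs c hc))

theorem exists_forest_of_derives {u : List (Symbol T G.NT)} {w : List T}
    (h : G.Derives u (w.map .terminal)) : ∃ cs : List (ParseTree T G.NT),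
      cs.map symbol = u ∧ (∀ c ∈ cs, c.IsValid G) ∧ cs.flatMap yield = w := by
  induction h using Relation.ReflTransGen.head_induction_on with
  | refl => exact ⟨w.map leaf, by simp [Function.comp_def], fun c hc => by
      obtain ⟨a, -, rfl⟩ := List.mem_map.mp hc; exact .leaf a,
      by induction w <;> simp [*]⟩
  | head hp _ ih =>
    obtain ⟨cs, hcs, hval, rfl⟩ := ih
    obtain ⟨r, hr, hrw⟩ := hp
    obtain ⟨p, q, rfl, rfl⟩ := hrw.exists_parts
    obtain ⟨cs', cs₃, rfl, h', h₃⟩ := List.map_eq_append_iff.mp hcs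
    obtain ⟨cs₁, cs₂, rfl, h₁, h₂⟩ := List.map_eq_append_iff.mp h'
    refine ⟨cs₁ ++ node r cs₂ :: cs₃, by simp [h₁, h₃], ?_, by simp⟩
    simp only [List.mem_append, List.mem_cons] at hval ⊢
    rintro c (hc | rfl | hc)
    exacts [hval c (.inl (.inl hc)), .node hr h₂ fun c hc => hval c (.inl (.inr hc)),
      hval c (.inr hc)]

theorem IsValid.exists_context_of_isChild {s t : ParseTree T G.NT} (hst : IsChild s t)
    (ht : t.IsValid G) : s.IsValid G ∧ ∃ l r : List T, t.yield = l ++ s.yield ++ r ∧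
      G.Derives [t.symbol] (l.map .terminal ++ [s.symbol] ++ r.map .terminal) := by
  cases hst with | @mk r cs hs =>
  cases ht with | node hr hout hcs =>
  obtain ⟨cs₁, cs₂, rfl⟩ := List.append_of_mem hs
  refine ⟨hcs s hs, cs₁.flatMap yield, cs₂.flatMap yield, by simp, ?_⟩
  have hstep : G.Derives [.nonterminal r.input] r.output := Produces.single ⟨r, hr, .input_output⟩
  rw [← hout, List.map_append, List.map_cons, List.append_cons] at hstep
  exact hstep.trans (((derives_flatMap_yield fun c (hc : c ∈ cs₁) =>
    (hcs c (by simp [hc])).derives).append (.refl _)).append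
      (derives_flatMap_yield fun c (hc : c ∈ cs₂) => (hcs c (by simp [hc])).derives))

theorem IsValid.exists_context {s t : ParseTree T G.NT} (hst : Relation.ReflTransGen IsChild s t)
    (ht : t.IsValid G) : s.IsValid G ∧ ∃ l r : List T, t.yield = l ++ s.yield ++ r ∧
      G.Derives [t.symbol] (l.map .terminal ++ [s.symbol] ++ r.map .terminal) := by
  induction hst with
  | refl => exact ⟨ht, [], [], by simp, by simpa using Derives.refl _⟩
  | tail _ hchild ih =>
    obtain ⟨hb, l₁, r₁, hy₁, hd₁⟩ := ht.exists_context_of_isChild hchild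
    obtain ⟨hs, l₂, r₂, hy₂, hd₂⟩ := ih hb
    refine ⟨hs, l₁ ++ l₂, r₂ ++ r₁, by simp [hy₁, hy₂], ?_⟩
    simpa using hd₁.substitute hd₂

def Avoids (S : Finset G.NT) (t : ParseTree T G.NT) : Prop :=
  ∀ s, ReflTransGen IsChild s t → ∀ A ∈ S, s.symbol ≠ .nonterminal A

theorem Avoids.insert_of_isChild [DecidableEq G.NT] {S : Finset G.NT} {A : G.NT}
    {c t : ParseTree T G.NT} (ht : t.Avoids S)
    (hA : ∀ s, TransGen IsChild s t → s.symbol ≠ .nonterminal A) (hc : IsChild c t) :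
    c.Avoids (insert A S) := by
  intro s hs B hB
  rcases Finset.mem_insert.mp hB with rfl | hB
  exacts [hA s (.tail' hs hc), ht s (.tail hs hc) B hB]

/-- If the root label `A` of `t` reappears at a proper subtree `s`, the profile of `s` serves for
`t` too, its context words `U, V` absorbing the rest of `t` (as `A ⇒* l A r`); otherwise `A` is
added to the labels avoided by the children. So labels along a branch of the profile are
distinct. -/
theorem IsValid.exists_profile [DecidableEq G.NT] {b : ℕ} {F : Finset G.NT}
    (hb : ∀ r ∈ G.rules, r.output.length ≤ b) (hF : ∀ r ∈ G.rules, r.input ∈ F)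
    (t : ParseTree T G.NT) (ht : t.IsValid G) (S : Finset G.NT) (hS : t.Avoids S) :
    ∃ p : Profile T G.NT, p.Fits (cfgR G) t.yield ∧ p.IsBounded b F ((F \ S).card + 1) ∧
      p.symbol = t.symbol := by
  induction t using wellFounded_isChild.transGen.induction generalizing S with | _ t ih =>
  cases ht with
  | leaf a => exact ⟨.leaf a, by simpa using .leaf a, .leaf a _, rfl⟩
  | @node r cs hr hout hcs =>
  by_cases hrep : ∃ s, TransGen IsChild s (.node r cs) ∧ s.symbol = .nonterminal r.input
  · obtain ⟨s, hs, hsym⟩ := hrep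
    obtain ⟨hsv, l, rr, hy, hd⟩ := (IsValid.node hr hout hcs).exists_context hs.to_reflTransGen
    obtain ⟨p, hfit, hbdd, hpsym⟩ := ih s hs hsv S fun u hu => hS u (hu.trans hs.to_reflTransGen)
    rcases p with _ | ⟨A, pl, ql, pcs⟩
    · simp [Profile.symbol, hsym] at hpsym
    obtain rfl : A = r.input := by simpa [Profile.symbol, hsym] using hpsym
    rw [hsym] at hd
    exact ⟨_, hy ▸ hfit.pad hd, hbdd.node_congr, rfl⟩
  · push Not at hrep
    have hA : r.input ∉ S := fun hA => hS _ .refl _ hA rfl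
    obtain ⟨pcs, hpcs⟩ := List.exists_forall₂_of_forall_exists fun c hc =>
      ih c (.single ⟨hc⟩) (hcs c hc) (insert r.input S) (hS.insert_of_isChild hrep ⟨hc⟩)
    refine ⟨.node r.input 0 0 pcs, ?_, ?_, rfl⟩
    · simpa [List.flatMap_def] using Profile.Fits.node (U := []) (V := []) (ws := cs.map yield)
        rfl rfl (nil_mem_cfgR_nil G _) (List.forall₂_map_right_iff.mpr (hpcs.imp fun _ _ h => h.1).flip)
    · rw [← Finset.card_erase_add_one (Finset.mem_sdiff.mpr ⟨hF r hr, hA⟩), ← Finset.sdiff_insert]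
      refine .node (hF r hr) ?_ fun p hp => ?_
      · rw [← hpcs.length_eq, ← List.length_map symbol, hout]; exact hb r hr
      · obtain ⟨c, -, -, hc, -⟩ := hpcs.exists_of_mem_right hp
        exact hc

end Grammar

end ParseTree

theorem exists_profile_of_mem_language {T : Type} {G : ContextFreeGrammar T} {b : ℕ}
    {F : Finset G.NT} (hb : ∀ r ∈ G.rules, r.output.length ≤ b)
    (hF : ∀ r ∈ G.rules, r.input ∈ F) {w : List T} (hw : w ∈ G.language) :
    ∃ p : Profile T G.NT, p.IsBounded b F (F.card + 1) ∧ p.Fits (cfgR G) w := by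
  classical
  obtain ⟨cs, hcs, hval, rfl⟩ := ParseTree.exists_forest_of_derives hw
  obtain ⟨t, rfl, -⟩ := List.map_eq_singleton_iff.mp hcs
  obtain ⟨p, hp, hpb, -⟩ := (hval t (by simp)).exists_profile hb hF t ∅ fun _ _ _ h =>
    absurd h (Finset.notMem_empty _)
  exact ⟨p, by simpa using hpb, by simpa using hp⟩

theorem exists_countLen_le_of_antichainFamily {T : Type} [Finite T] {r : T → T → Prop}
    (G : ContextFreeGrammar T) (hL : ∀ A, IsChainLang r (cfgL G A))
    (hR : ∀ A w, IsChainLang r (cfgR G A w)) {L : Set (List T)} (hsub : L ⊆ G.language)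
    (hanti : AntichainFamily r L) : ∃ K E : ℕ, ∀ n, countLen L n ≤ K * (n + 1) ^ E := by
  classical
  let F := G.rules.image (·.input)
  let b := G.rules.sup (·.output.length)
  let e : G.NT → Option F := fun A => if h : A ∈ F then some ⟨A, h⟩ else none
  have he : Set.InjOn e F := fun A hA A' hA' h => by
    simp only [e, dif_pos (Finset.mem_coe.mp hA), dif_pos (Finset.mem_coe.mp hA')] at h
    simpa using h
  obtain ⟨K, E, hKE⟩ := Profile.exists_card_code_le T (Option F) b (F.card + 1)
  refine ⟨K, E, fun n => le_trans (Set.ncard_le_card_of_exists_code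
    (fun w c => ∃ p : Profile T G.NT, p.IsBounded b F (F.card + 1) ∧ p.Fits (cfgR G) w ∧
      p.encode e b n _ = c) ?_ ?_) (hKE n)⟩
  · rintro w ⟨hw, -⟩
    obtain ⟨p, hp, hfit⟩ := exists_profile_of_mem_language
      (fun r hr => Finset.le_sup (f := (·.output.length)) hr)
      (fun r hr => Finset.mem_image_of_mem _ hr) (hsub hw)
    exact ⟨_, p, hp, hfit, rfl⟩
  · rintro w hw w' hw' c ⟨p, hp, hfit, rfl⟩ ⟨p', hp', hfit', hpp'⟩
    obtain rfl := Profile.encode_injOn he _ ⟨hp', w', hfit', hw'.2.le⟩ ⟨hp, w, hfit, hw.2.le⟩ hpp'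
    by_contra hne
    exact hanti n w hw w' hw' hne (Profile.Fits.stableLexComp hL hR _ hfit hfit').lexComp

theorem polyGrowth_of_countLen_le {α : Type*} {L : Set (List α)} {K E : ℕ}
    (h : ∀ n, countLen L n ≤ K * (n + 1) ^ E) : PolyGrowth L := by
  refine ⟨E, (Filter.limsup_le_of_le (by isBoundedDefault) ?_).trans_lt
    (ENNReal.natCast_lt_top (K * 2 ^ E))⟩
  filter_upwards [Filter.eventually_ge_atTop 1] with n hn
  rw [ENNReal.div_le_iff (by simp; omega) (by simp)]
  have : (n + 1) ^ E ≤ 2 ^ E * n ^ E := by rw [← mul_pow]; gcongr; omega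
  exact_mod_cast (h n).trans (by rw [mul_assoc]; gcongr)

theorem cfg_chains_poly_antichain_growth_general {T : Type} [Fintype T] [PartialOrder T]
    (G : ContextFreeGrammar T)
    (hL : ∀ A : G.NT, IsChainLang (· < ·) (cfgL G A))
    (hR : ∀ A : G.NT, ∀ w : List T, IsChainLang (· < ·) (cfgR G A w)) :
    PolyAntichainGrowth (· < ·) (G.language : Set (List T)) := by
  intro L hsub hanti
  obtain ⟨K, E, h⟩ := exists_countLen_le_of_antichainFamily G hL hR hsub hanti
  exact polyGrowth_of_countLen_le h

/-- If every nonterminal of `G` is bireachable and all the sets `L_A(G)` and `R_{A,w}(G)`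
are chains, then `L(G)` has polynomial antichain growth. -/
theorem cfg_chains_poly_antichain_growth {T : Type} [Fintype T] [PartialOrder T]
    (G : ContextFreeGrammar T)
    (hbi : ∀ A : G.NT, CfgBireachable G A)
    (hL : ∀ A : G.NT, IsChainLang (· < ·) (cfgL G A))
    (hR : ∀ A : G.NT, ∀ w : List T, IsChainLang (· < ·) (cfgR G A w)) :
    PolyAntichainGrowth (· < ·) (G.language : Set (List T)) :=
  cfg_chains_poly_antichain_growth_general G hL hR
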